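/- For all k ∈ ℤ and nonzero l ∈ ℤ, the commutator identity [a*_n(l), x*_n⁺(k)] = ([2l]/l) · x*_n⁺(k+l) holds in M_{2n}(R). -/
import Mathlib


noncomputable section

open LaurentPolynomial

/-- The base field `F = ℚ(q)`. -/
abbrev F : Type := RatFunc ℚ

/-- The Laurent polynomial ring `R = F[z, z⁻¹]`. -/
abbrev R : Type := LaurentPolynomial F

/-- The generator `q` of `ℚ(q)`. -/
def q : F := RatFunc.X

/-- The quantum integer `[m] = (q^m − q^{−m})/(q − q^{−1})`. -/
def qint (m : ℤ) : F := (q ^ m - q ^ (-m)) / (q - q⁻¹)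

/-- The matrix unit `E_{ab} ∈ M_N(R)` in the 1-based labels
`v_1,…,v_n,v_{n̄},…,v_{1̄}` (so `v_{ī} ↔ 2n+1−i`, e.g. `n̄ ↔ n+1`). -/
def E (N a b : ℕ) : Matrix (Fin N) (Fin N) R :=
  Matrix.of fun r s => if (r : ℕ) + 1 = a ∧ (s : ℕ) + 1 = b then (1 : R) else 0

/-- The element `(q^c z)^k ∈ R`. -/
def zq (c k : ℤ) : R := C (q ^ (c * k)) * T k

/-- Type `D_n⁽¹⁾` dual module:
`x*_n⁺(k) = (−q^{−1})(q^{−n+1}z)^k (E_{n̄,n−1} + E_{\overline{n−1},n})` in `M_{2n}(R)`. -/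
def xpsD (n : ℕ) (k : ℤ) : Matrix (Fin (2*n)) (Fin (2*n)) R :=
  ((-(C q⁻¹)) * zq (-(n : ℤ) + 1) k) • (E (2*n) (n+1) (n-1) + E (2*n) (n+2) n)

/-- Type `D_n⁽¹⁾` dual module: `a*_n(l) = ([l]/l)(q^{−n+1}z)^l
(q^{−l}(E_{n̄,n̄} + E_{\overline{n−1},\overline{n−1}}) − q^l(E_{n−1,n−1} + E_{n,n}))`
in `M_{2n}(R)`. -/
def asD (n : ℕ) (l : ℤ) : Matrix (Fin (2*n)) (Fin (2*n)) R :=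
  (C (qint l / (l : F)) * zq (-(n : ℤ) + 1) l) •
    (C (q ^ (-l)) • (E (2*n) (n+1) (n+1) + E (2*n) (n+2) (n+2)) -
     C (q ^ l) • (E (2*n) (n-1) (n-1) + E (2*n) n n))

lemma E_mul_ne (N a b c d : ℕ) (h : b ≠ c) : E N a b * E N c d = 0 := by
  refine Matrix.ext fun r s => ?_
  simp only [Matrix.mul_apply, E, Matrix.of_apply, Matrix.zero_apply]
  apply Finset.sum_eq_zero
  intro t _
  by_cases hb : (t : ℕ) + 1 = b
  · rw [if_neg (fun hp : (t : ℕ) + 1 = c ∧ (s : ℕ) + 1 = d => h (hb.symm.trans hp.1)), mul_zero]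
  · rw [if_neg (fun hp => hb hp.2), zero_mul]

lemma E_mul_eq (N a b d : ℕ) (hb : 1 ≤ b) (hbN : b ≤ N) :
    E N a b * E N b d = E N a d := by
  refine Matrix.ext fun r s => ?_
  simp only [Matrix.mul_apply, E, Matrix.of_apply]
  have hlt : b - 1 < N := by omega
  rw [Finset.sum_eq_single (⟨b - 1, hlt⟩ : Fin N)]
  · simp only []
    have : (b - 1) + 1 = b := by omega
    by_cases h1 : (r : ℕ) + 1 = a <;> by_cases h2 : (s : ℕ) + 1 = d <;>
      simp [h1, h2, this]
  · intro t _ ht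
    have : (t : ℕ) + 1 ≠ b := by
      intro h; apply ht; apply Fin.ext; simp; omega
    simp [this]
  · intro h; exact absurd (Finset.mem_univ _) h

lemma hq0 : q ≠ 0 := RatFunc.X_ne_zero

lemma zq_mul (c k l : ℤ) : zq c l * zq c k = zq c (k + l) := by
  unfold zq
  rw [show c * (k + l) = c * l + c * k by ring, zpow_add₀ hq0, map_mul, T_add]
  ring

lemma qint_two (l : ℤ) : qint (2 * l) = qint l * (q ^ l + q ^ (-l)) := by
  unfold qint
  rw [div_mul_eq_mul_div]
  congr 1
  rw [show (2 : ℤ) * l = l + l by ring, neg_add, zpow_add₀ hq0, zpow_add₀ hq0]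
  ring

/-- `[a*_n(l), x*_n⁺(k)] = ([2l]/l) x*_n⁺(k+l)` in `M_{2n}(R)`. -/
theorem asD_xpsD_comm (n : ℕ) (hn : 2 ≤ n) (k l : ℤ) (hl : l ≠ 0) :
    asD n l * xpsD n k - xpsD n k * asD n l =
      C (qint (2 * l) / (l : F)) • xpsD n (k + l) := by
  have hPX : (E (2*n) (n+1) (n+1) + E (2*n) (n+2) (n+2)) *
      (E (2*n) (n+1) (n-1) + E (2*n) (n+2) n) =
      E (2*n) (n+1) (n-1) + E (2*n) (n+2) n := by
    rw [add_mul, mul_add, mul_add, E_mul_eq _ _ _ _ (by omega) (by omega),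
      E_mul_ne _ _ _ _ _ (by omega), E_mul_ne _ _ _ _ _ (by omega),
      E_mul_eq _ _ _ _ (by omega) (by omega)]
    simp
  have hQX : (E (2*n) (n-1) (n-1) + E (2*n) n n) *
      (E (2*n) (n+1) (n-1) + E (2*n) (n+2) n) = 0 := by
    rw [add_mul, mul_add, mul_add, E_mul_ne _ _ _ _ _ (by omega),
      E_mul_ne _ _ _ _ _ (by omega), E_mul_ne _ _ _ _ _ (by omega),
      E_mul_ne _ _ _ _ _ (by omega)]
    simp
  have hXP : (E (2*n) (n+1) (n-1) + E (2*n) (n+2) n) *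
      (E (2*n) (n+1) (n+1) + E (2*n) (n+2) (n+2)) = 0 := by
    rw [add_mul, mul_add, mul_add, E_mul_ne _ _ _ _ _ (by omega),
      E_mul_ne _ _ _ _ _ (by omega), E_mul_ne _ _ _ _ _ (by omega),
      E_mul_ne _ _ _ _ _ (by omega)]
    simp
  have hXQ : (E (2*n) (n+1) (n-1) + E (2*n) (n+2) n) *
      (E (2*n) (n-1) (n-1) + E (2*n) n n) =
      E (2*n) (n+1) (n-1) + E (2*n) (n+2) n := by
    rw [add_mul, mul_add, mul_add, E_mul_eq _ _ _ _ (by omega) (by omega),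
      E_mul_ne _ _ _ _ _ (by omega), E_mul_ne _ _ _ _ _ (by omega),
      E_mul_eq _ _ _ _ (by omega) (by omega)]
    simp
  rw [asD, xpsD, xpsD]
  rw [Matrix.smul_mul, Matrix.mul_smul, Matrix.smul_mul, Matrix.mul_smul,
    Matrix.sub_mul, Matrix.mul_sub, Matrix.smul_mul, Matrix.smul_mul,
    Matrix.mul_smul, Matrix.mul_smul, hPX, hQX, hXP, hXQ]
  simp only [smul_zero, sub_zero, zero_sub, smul_neg, smul_smul, ← sub_smul, ← neg_smul,
    ← add_smul]
  congr 1
  have hz : zq (-(n:ℤ)+1) l * zq (-(n:ℤ)+1) k = zq (-(n:ℤ)+1) (k + l) := zq_mul _ _ _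
  have hql : qint (2*l) / (l : F) = (qint l / l) * (q ^ l + q ^ (-l)) := by
    rw [qint_two, div_mul_eq_mul_div, mul_comm (qint l) (q^l + q^(-l)),
      mul_div_assoc]
  rw [← hz, hql, map_mul, map_add]
  ring
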